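/- arXiv:1001.0886 — 2 statements merged into one kernel-verified Lean document; each statement's English description precedes it below -/
import Mathlib

section
/- Let G be a graph admitting a map ρ from its vertices to points on a circle of radius 1/√3 in the plane such that adjacent vertices are mapped to points at Euclidean distance exactly 1. Then the chromatic number of G is at most 3. -/
/-!
A chord of length `√3 r` in a circle of radius `r` subtends the angle `2π/3` at the centre, so the
oriented angles (from a fixed direction) of the images of adjacent vertices differ by `±2π/3`.
Colouring a vertex by the third `⌊3θ/2π⌋ mod 3` of the circle containing its angle `θ` therefore
gives adjacent vertices colours differing by `±1` in `ZMod 3`.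
-/

open Real InnerProductGeometry Module

noncomputable def Real.Angle.thirdsIndex (θ : Real.Angle) : ZMod 3 :=
  ⌊θ.toReal / (2 * π / 3)⌋

theorem Real.Angle.thirdsIndex_add_intCast_mul (θ : Real.Angle) (m : ℤ) :
    (θ + ↑(m * (2 * π / 3))).thirdsIndex = θ.thirdsIndex + m := by
  obtain ⟨k, hk⟩ : ∃ k : ℤ,
      (θ + ↑(m * (2 * π / 3))).toReal - (θ.toReal + m * (2 * π / 3)) = 2 * π * k := by
    rw [← angle_eq_iff_two_pi_dvd_sub, coe_add, coe_toReal, coe_toReal]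
  have hquot : (θ + ↑(m * (2 * π / 3))).toReal / (2 * π / 3)
      = θ.toReal / (2 * π / 3) + ↑(m + 3 * k) := by
    rw [eq_add_of_sub_eq hk]
    push_cast
    field_simp
    ring
  simp only [thirdsIndex, hquot, Int.floor_add_intCast]
  push_cast
  rw [show (3 : ZMod 3) = 0 from rfl]
  ring

theorem Real.Angle.thirdsIndex_add_ne {ψ : Real.Angle}
    (hψ : ψ = ↑(2 * π / 3) ∨ ψ = -↑(2 * π / 3)) (θ : Real.Angle) :
    (θ + ψ).thirdsIndex ≠ θ.thirdsIndex := by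
  obtain ⟨m, hm, rfl⟩ : ∃ m : ℤ, (m : ZMod 3) ≠ 0 ∧ ψ = ↑(m * (2 * π / 3)) := by
    rcases hψ with rfl | rfl
    · exact ⟨1, by decide, by simp⟩
    · exact ⟨-1, by decide, by simp [coe_neg]⟩
  rw [thirdsIndex_add_intCast_mul]
  simpa using hm

theorem Real.cos_two_pi_div_three : cos (2 * π / 3) = -(1 / 2) := by
  rw [show 2 * π / 3 = π - π / 3 by ring, cos_pi_sub, cos_pi_div_three]

theorem InnerProductGeometry.angle_eq_two_pi_div_three_of_norm_sub
    {E : Type*} [NormedAddCommGroup E] [InnerProductSpace ℝ E] {x y : E}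
    (hy : y ≠ 0) (hxy : ‖x‖ = ‖y‖) (h : ‖x - y‖ = √3 * ‖y‖) : angle x y = 2 * π / 3 := by
  have hcos : cos (angle x y) = cos (2 * π / 3) := by
    have hlaw := norm_sub_sq_eq_norm_sq_add_norm_sq_sub_two_mul_norm_mul_norm_mul_cos_angle x y
    rw [h, hxy] at hlaw
    rw [cos_two_pi_div_three]
    have hy2 : 0 < ‖y‖ * ‖y‖ := by positivity
    nlinarith [sq_sqrt (show (0 : ℝ) ≤ 3 by norm_num)]
  refine injOn_cos ⟨angle_nonneg x y, angle_le_pi x y⟩ ⟨by positivity, ?_⟩ hcos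
  linarith [pi_pos]

theorem SimpleGraph.colorable_three_of_norm_sub_eq_sqrt_three_mul
    {V E : Type*} [NormedAddCommGroup E] [InnerProductSpace ℝ E] [Fact (finrank ℝ E = 2)]
    (G : SimpleGraph V) (s : E) {r : ℝ} (hr : r ≠ 0) (ρ : V → E)
    (hsph : ∀ v, ‖ρ v - s‖ = r) (hedge : ∀ u v, G.Adj u v → ‖ρ u - ρ v‖ = √3 * r) :
    G.Colorable 3 := by
  have := FiniteDimensional.of_fact_finrank_eq_two (K := ℝ) (V := E)
  let b := finBasisOfFinrankEq ℝ E (Fact.out : finrank ℝ E = 2)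
  let o : Orientation ℝ E (Fin 2) := b.orientation
  have hne : ∀ v, ρ v - s ≠ 0 := fun v h => hr (by rw [← hsph v, h, norm_zero])
  refine ⟨Coloring.mk (fun v => (o.oangle (b 0) (ρ v - s)).thirdsIndex) fun {u v} huv => ?_⟩
  have hangle : angle (ρ v - s) (ρ u - s) = 2 * π / 3 :=
    angle_eq_two_pi_div_three_of_norm_sub (hne u) (by rw [hsph, hsph])
      (by rw [sub_sub_sub_cancel_right, hedge v u huv.symm, hsph])
  have hoangle := o.oangle_eq_angle_or_eq_neg_angle (hne v) (hne u)
  rw [hangle] at hoangle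
  rw [← o.oangle_add (b.ne_zero 0) (hne v) (hne u)]
  exact Real.Angle.thirdsIndex_add_ne hoangle _

theorem circle_representation_chromatic_le_three_general {V : Type*}
    (G : SimpleGraph V) (s : EuclideanSpace ℝ (Fin 2))
    (ρ : V → EuclideanSpace ℝ (Fin 2))
    (hsph : ∀ v, ‖ρ v - s‖ = 1 / Real.sqrt 3)
    (hedge : ∀ u v, G.Adj u v → dist (ρ u) (ρ v) = 1) :
    G.chromaticNumber ≤ 3 := by
  have : Fact (finrank ℝ (EuclideanSpace ℝ (Fin 2)) = 2) := ⟨finrank_euclideanSpace_fin⟩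
  refine (G.colorable_three_of_norm_sub_eq_sqrt_three_mul s (by positivity) ρ hsph
    fun u v huv => ?_).chromaticNumber_le
  rw [← dist_eq_norm, hedge u v huv]
  field_simp

theorem circle_representation_chromatic_le_three {V : Type*} [Fintype V]
    (G : SimpleGraph V) (s : EuclideanSpace ℝ (Fin 2))
    (ρ : V → EuclideanSpace ℝ (Fin 2))
    (hsph : ∀ v, ‖ρ v - s‖ = 1 / Real.sqrt 3)
    (hedge : ∀ u v, G.Adj u v → dist (ρ u) (ρ v) = 1) :
    G.chromaticNumber ≤ 3 :=
  circle_representation_chromatic_le_three_general G s ρ hsph hedge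
end

section
/- For k ≥ 1, the join of the complete graph K_k with two isolated vertices (i.e., K_k + {v, w} where v, w are each adjacent to all of K_k but not to each other) admits an injective unit-distance representation in ℝ^k, but admits none in ℝ^{k−1}. -/
/-!
The `k` clique vertices together with `v` form a regular unit simplex on `k + 1` points; seen
from `v` its other vertices are unit vectors with pairwise inner products `1/2`, whose Gram
matrix `(I + J)/2` is nonsingular, so they are linearly independent and need `k` dimensions.
In `ℝ^k` put the clique at `(√2 / 2) • eᵢ`; the points `c • (1, …, 1)` at distance `1` from
all of them are given by the two distinct roots of a quadratic in `c`, and serve as `v` and `w`.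
-/

/-- The join of `K_k` with two isolated vertices: the `inl` vertices form a complete
graph, each of the two `inr` vertices is adjacent to all `inl` vertices, and the two
`inr` vertices are not adjacent to each other. -/
def completeJoinTwo (k : ℕ) : SimpleGraph (Fin k ⊕ Fin 2) :=
  SimpleGraph.fromRel (fun a b => a.isLeft ∨ b.isLeft)

open Finset
open scoped RealInnerProductSpace

def IsUnitDistanceRep {V P : Type*} [PseudoMetricSpace P] (G : SimpleGraph V) (ρ : V → P) : Prop :=
  ∀ a b, G.Adj a b → dist (ρ a) (ρ b) = 1

theorem IsUnitDistanceRep.injective {V P : Type*} [PseudoMetricSpace P] {G : SimpleGraph V}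
    {ρ : V → P} (hρ : IsUnitDistanceRep G ρ)
    (h : ∀ a b, a ≠ b → ¬ G.Adj a b → ρ a ≠ ρ b) : Function.Injective ρ := by
  intro a b hab
  by_contra hne
  by_cases hadj : G.Adj a b
  · simpa [hab] using hρ a b hadj
  · exact h a b hne hadj hab

@[simp]
theorem completeJoinTwo_adj {k : ℕ} {a b : Fin k ⊕ Fin 2} :
    (completeJoinTwo k).Adj a b ↔ a ≠ b ∧ (a.isLeft ∨ b.isLeft) := by
  simp [completeJoinTwo, or_comm]

section Simplex

variable {ι E : Type*} [NormedAddCommGroup E] [InnerProductSpace ℝ E]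

theorem inner_eq_half_of_norm_eq_one {x y : E} (hx : ‖x‖ = 1) (hy : ‖y‖ = 1)
    (hxy : ‖x - y‖ = 1) : ⟪x, y⟫ = 1 / 2 := by
  have h := norm_sub_sq_real x y
  rw [hx, hy, hxy] at h
  linarith

theorem linearIndependent_of_inner_eq_half {q : ι → E} (hnorm : ∀ i, ‖q i‖ = 1)
    (hinner : Pairwise fun i j => ⟪q i, q j⟫ = 1 / 2) : LinearIndependent ℝ q := by
  classical
  have inner_eq : ∀ i j, ⟪q i, q j⟫ = 1 / 2 + if i = j then 1 / 2 else 0 := by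
    intro i j
    split_ifs with h
    · rw [h, real_inner_self_eq_norm_sq, hnorm]; norm_num
    · rw [hinner h, add_zero]
  rw [linearIndependent_iff']
  intro s g hg
  -- pairing the relation with `q j` shows that every `g j` equals `-∑ i ∈ s, g i`
  have hg_eq : ∀ j ∈ s, g j = -∑ i ∈ s, g i := by
    intro j hj
    have h0 : ∑ i ∈ s, g i * ⟪q i, q j⟫ = 0 := by
      simpa [sum_inner, real_inner_smul_left] using congrArg (⟪·, q j⟫) hg
    simp only [inner_eq, mul_add, mul_ite, mul_zero, sum_add_distrib, sum_ite_eq', if_pos hj,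
      ← sum_mul] at h0
    linarith
  have hsum : ∑ i ∈ s, g i = 0 := by
    have h := sum_congr rfl hg_eq
    rw [sum_const, nsmul_eq_mul] at h
    have h' : (1 + (s.card : ℝ)) * ∑ i ∈ s, g i = 0 := by linarith
    exact (mul_eq_zero.mp h').resolve_left
      (add_pos_of_pos_of_nonneg one_pos s.card.cast_nonneg).ne'
  intro j hj
  rw [hg_eq j hj, hsum, neg_zero]

theorem card_le_finrank_of_dist_eq_one [FiniteDimensional ℝ E] [Fintype ι] {v : E} {p : ι → E}
    (hv : ∀ i, dist (p i) v = 1) (hp : Pairwise fun i j => dist (p i) (p j) = 1) :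
    Fintype.card ι ≤ Module.finrank ℝ E := by
  have hnorm : ∀ i, ‖p i - v‖ = 1 := fun i => by rw [← dist_eq_norm, hv]
  refine (linearIndependent_of_inner_eq_half hnorm fun i j hij =>
    inner_eq_half_of_norm_eq_one (hnorm i) (hnorm j) ?_).fintype_card_le_finrank
  rw [sub_sub_sub_cancel_right, ← dist_eq_norm, hp hij]

end Simplex

theorem le_of_isUnitDistanceRep_completeJoinTwo {k n : ℕ}
    {ρ : Fin k ⊕ Fin 2 → EuclideanSpace ℝ (Fin n)}
    (hρ : IsUnitDistanceRep (completeJoinTwo k) ρ) : k ≤ n := by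
  simpa using card_le_finrank_of_dist_eq_one (p := ρ ∘ Sum.inl) (v := ρ (.inr 0))
    (fun i => hρ _ _ (by simp)) (fun i j hij => hρ _ _ (by simpa using hij))

section Construction

variable {ι : Type*} [Fintype ι] [DecidableEq ι]

theorem dist_single_single_sq {i j : ι} (hij : i ≠ j) (a : ℝ) :
    dist (EuclideanSpace.single i a) (EuclideanSpace.single j a) ^ 2 = 2 * a ^ 2 := by
  rw [dist_eq_norm, norm_sub_sq_real, EuclideanSpace.inner_single_left, PiLp.single_apply,
    if_neg hij]
  simp only [PiLp.norm_single, Real.norm_eq_abs, sq_abs, Real.ringHom_apply, mul_zero, sub_zero]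
  ring

theorem dist_single_const_sq (i : ι) (a c : ℝ) :
    dist (EuclideanSpace.single i a) (WithLp.toLp 2 fun _ : ι => c) ^ 2
      = a ^ 2 - 2 * a * c + Fintype.card ι * c ^ 2 := by
  rw [dist_eq_norm, norm_sub_sq_real, EuclideanSpace.inner_single_left]
  simp only [PiLp.norm_single, Real.norm_eq_abs, sq_abs, Real.ringHom_apply,
    EuclideanSpace.real_norm_sq_eq, sum_const, card_univ, nsmul_eq_mul]
  ring

end Construction

/-- `c • (1, …, 1)` is at distance `1` from every `(√2 / 2) • eᵢ` exactly when
`k c² - √2 c - 1/2 = 0`; these are the two roots. -/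
noncomputable def apexCoord (k : ℕ) : Fin 2 → ℝ :=
  ![(√2 + √(2 + 2 * k)) / (2 * k), (√2 - √(2 + 2 * k)) / (2 * k)]

theorem apexCoord_strictAnti {k : ℕ} (hk : 0 < k) : StrictAnti (apexCoord k) := by
  refine Fin.strictAnti_iff_succ_lt.mpr fun i => ?_
  obtain rfl : i = 0 := Subsingleton.elim _ _
  have hroot : 0 < √(2 + 2 * k) := by positivity
  simp only [apexCoord, Fin.succ_zero_eq_one, Fin.castSucc_zero, Matrix.cons_val_one,
    Matrix.cons_val_fin_one, Matrix.cons_val_zero]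
  gcongr
  linarith

theorem apexCoord_quadratic {k : ℕ} (hk : 0 < k) (r : Fin 2) :
    k * (apexCoord k r * apexCoord k r) + -√2 * apexCoord k r + -(1 / 2) = 0 := by
  have hdiscrim : discrim (k : ℝ) (-√2) (-(1 / 2)) = √(2 + 2 * k) * √(2 + 2 * k) := by
    rw [discrim, Real.mul_self_sqrt (by positivity), neg_sq, Real.sq_sqrt zero_le_two]
    ring
  refine (quadratic_eq_zero_iff (by positivity) hdiscrim _).mpr ?_
  fin_cases r <;> simp [apexCoord]

noncomputable def joinRep (k : ℕ) : Fin k ⊕ Fin 2 → EuclideanSpace ℝ (Fin k)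
  | .inl i => EuclideanSpace.single i (√2 / 2)
  | .inr r => WithLp.toLp 2 fun _ => apexCoord k r

theorem isUnitDistanceRep_joinRep (k : ℕ) :
    IsUnitDistanceRep (completeJoinTwo k) (joinRep k) := by
  have h2 : (√2 / 2) ^ 2 = 1 / 2 := by rw [div_pow, Real.sq_sqrt zero_le_two]; norm_num
  have dist_eq_one {x y : EuclideanSpace ℝ (Fin k)} (h : dist x y ^ 2 = 1) : dist x y = 1 :=
    (pow_eq_one_iff_of_nonneg dist_nonneg two_ne_zero).mp h
  have inl_inl {i j : Fin k} (hij : i ≠ j) : dist (joinRep k (.inl i)) (joinRep k (.inl j)) = 1 :=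
    dist_eq_one (by rw [joinRep, joinRep, dist_single_single_sq hij, h2]; norm_num)
  have inl_inr (i : Fin k) (r : Fin 2) : dist (joinRep k (.inl i)) (joinRep k (.inr r)) = 1 := by
    refine dist_eq_one ?_
    rw [joinRep, joinRep, dist_single_const_sq, Fintype.card_fin, h2]
    linarith [apexCoord_quadratic i.pos r]
  rintro (i | r) (j | s) hadj
  · exact inl_inl (by simpa using hadj)
  · exact inl_inr i s
  · rw [dist_comm]; exact inl_inr j r
  · simp at hadj

theorem joinRep_injective {k : ℕ} (hk : 0 < k) : Function.Injective (joinRep k) := by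
  refine (isUnitDistanceRep_joinRep k).injective fun a b hne hadj hab => ?_
  rcases a with i | r <;> rcases b with j | s
  · simp [hne] at hadj
  · simp at hadj
  · simp at hadj
  · have hrs : apexCoord k r = apexCoord k s := congrArg (· ⟨0, hk⟩) hab
    exact hne (congrArg Sum.inr ((apexCoord_strictAnti hk).injective hrs))

theorem join_dimension (k : ℕ) (hk : 1 ≤ k) :
    (∃ ρ : (Fin k ⊕ Fin 2) → EuclideanSpace ℝ (Fin k),
      Function.Injective ρ ∧
      ∀ a b, (completeJoinTwo k).Adj a b → dist (ρ a) (ρ b) = 1) ∧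
    ¬ (∃ ρ : (Fin k ⊕ Fin 2) → EuclideanSpace ℝ (Fin (k - 1)),
      Function.Injective ρ ∧
      ∀ a b, (completeJoinTwo k).Adj a b → dist (ρ a) (ρ b) = 1) := by
  refine ⟨⟨joinRep k, joinRep_injective hk, isUnitDistanceRep_joinRep k⟩, ?_⟩
  rintro ⟨ρ, -, hρ⟩
  have := le_of_isUnitDistanceRep_completeJoinTwo hρ
  omega
end
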